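/- For every integer N ≥ 4, ∑_{k=1}^{N−1} ( cos(2πk/N) + 1/(2 − 2cos(2πk/N)) ) · ( 1 − exp(−4πik/N) ) = N − 2 (as complex numbers; in particular the sum is real). -/

import Mathlib

/-!
Put `ζ = exp (2πi/N)` and `z = ζ^k`. Then `cos (2πk/N) = (z + z⁻¹)/2` and `2 - 2 cos = -(1 - z)²/z`,
so the `k`-th summand is `(z - z⁻³)/2 + z⁻¹ + 2/(1 - z)`. Over the nontrivial `N`-th roots of unity
the power sums of `z`, `z⁻¹` and `z⁻³` are all `-1` (for `z⁻³` this needs `N ∤ 3`, i.e. `N ≥ 4`),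
while pairing `k` with `N - k` shows `∑ 1/(1 - ζ^k) = (N - 1)/2`. The total is `-1 + (N - 1)`.
-/

open Real Finset

section RootsOfUnity

variable {K : Type*} [Field K]

theorem sum_Ico_one_pow_eq_neg_one {w : K} {N : ℕ} (hN : N ≠ 0) (hw : w ^ N = 1) (hw1 : w ≠ 1) :
    ∑ k ∈ Ico 1 N, w ^ k = -1 := by
  rw [geom_sum_Ico hw1 (Nat.one_le_iff_ne_zero.mpr hN), hw, pow_one,
    div_eq_iff (sub_ne_zero.mpr hw1)]
  ring

theorem IsPrimitiveRoot.sum_Ico_pow_pow_eq_neg_one {ζ : K} {N j : ℕ} (hζ : IsPrimitiveRoot ζ N)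
    (hN : N ≠ 0) (hj : ¬N ∣ j) : ∑ k ∈ Ico 1 N, (ζ ^ k) ^ j = -1 := by
  simp only [pow_right_comm ζ _ j]
  exact sum_Ico_one_pow_eq_neg_one hN (by rw [pow_right_comm, hζ.pow_eq_one, one_pow])
    fun h => hj ((hζ.pow_eq_one_iff_dvd j).mp h)

theorem one_div_one_sub_add_one_div_one_sub_inv {z : K} (hz0 : z ≠ 0) (hz1 : z ≠ 1) :
    1 / (1 - z) + 1 / (1 - z⁻¹) = 1 := by
  have : 1 - z ≠ 0 := sub_ne_zero.mpr hz1.symm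
  field_simp
  ring

theorem IsPrimitiveRoot.two_mul_sum_Ico_one_div_one_sub_pow {ζ : K} {N : ℕ}
    (hζ : IsPrimitiveRoot ζ N) : 2 * ∑ k ∈ Ico 1 N, 1 / (1 - ζ ^ k) = ((N - 1 : ℕ) : K) := by
  have hreflect : ∑ k ∈ Ico 1 N, 1 / (1 - ζ ^ (N - k)) = ∑ k ∈ Ico 1 N, 1 / (1 - ζ ^ k) := by
    rw [sum_Ico_reflect (fun k => 1 / (1 - ζ ^ k)) 1 N.le_succ, Nat.add_sub_cancel_left,
      Nat.add_sub_cancel]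
  calc 2 * ∑ k ∈ Ico 1 N, 1 / (1 - ζ ^ k)
      = ∑ k ∈ Ico 1 N, (1 / (1 - ζ ^ k) + 1 / (1 - ζ ^ (N - k))) := by
        rw [sum_add_distrib, hreflect, two_mul]
    _ = ∑ k ∈ Ico 1 N, 1 := by
        refine sum_congr rfl fun k hk => ?_
        obtain ⟨hk1, hkN⟩ := mem_Ico.mp hk
        have hinv : ζ ^ (N - k) = (ζ ^ k)⁻¹ :=
          eq_inv_of_mul_eq_one_left (by rw [← pow_add, Nat.sub_add_cancel hkN.le, hζ.pow_eq_one])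
        rw [hinv]
        exact one_div_one_sub_add_one_div_one_sub_inv (pow_ne_zero _ (hζ.ne_zero (by omega)))
          (hζ.pow_ne_one_of_pos_of_lt (by omega) hkN)
    _ = ((N - 1 : ℕ) : K) := by simp

end RootsOfUnity

theorem eigenvalue_summand_eq {K : Type*} [Field K] [NeZero (2 : K)] {z : K} (hz0 : z ≠ 0)
    (hz1 : z ≠ 1) :
    ((z + z⁻¹) / 2 + 1 / (2 - 2 * ((z + z⁻¹) / 2))) * (1 - z⁻¹ ^ 2)
      = (z - z⁻¹ ^ 3) / 2 + z⁻¹ + 2 * (1 / (1 - z)) := by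
  have : 1 - z ≠ 0 := sub_ne_zero.mpr hz1.symm
  have hdenom : (2 : K) - 2 * ((z + z⁻¹) / 2) = -(1 - z) ^ 2 / z := by
    field_simp
    ring
  rw [hdenom]
  field_simp
  ring

theorem Complex.ofReal_cos_eq_exp_add_inv (x : ℝ) :
    (Real.cos x : ℂ) = (exp (x * I) + (exp (x * I))⁻¹) / 2 := by
  rw [Complex.ofReal_cos, ← Complex.exp_neg, ← neg_mul, ← Complex.two_cos]
  ring

theorem ngon_second_eigenvalue_sum (N : ℕ) (hN : 4 ≤ N) :
    ∑ k ∈ Finset.Icc 1 (N - 1),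
      (((Real.cos (2 * π * k / N) : ℝ) : ℂ) +
          1 / (2 - 2 * ((Real.cos (2 * π * k / N) : ℝ) : ℂ))) *
        (1 - Complex.exp (-(4 * (π : ℂ) * Complex.I * k / N))) = (N : ℂ) - 2 := by
  set ζ := Complex.exp (2 * π * Complex.I / N)
  have hN0 : N ≠ 0 := by omega
  have hζ : IsPrimitiveRoot ζ N := Complex.isPrimitiveRoot_exp N hN0
  have hcos (k : ℕ) : ((Real.cos (2 * π * k / N) : ℝ) : ℂ) = (ζ ^ k + (ζ ^ k)⁻¹) / 2 := by
    rw [Complex.ofReal_cos_eq_exp_add_inv, ← Complex.exp_nat_mul]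
    push_cast
    ring_nf
  have hexp (k : ℕ) : Complex.exp (-(4 * (π : ℂ) * Complex.I * k / N)) = ((ζ ^ k)⁻¹) ^ 2 := by
    rw [← Complex.exp_nat_mul, ← Complex.exp_neg, ← Complex.exp_nat_mul]
    ring_nf
  have hz1 : ∀ k ∈ Ico 1 N, ζ ^ k ≠ 1 := fun k hk =>
    hζ.pow_ne_one_of_pos_of_lt (Nat.one_le_iff_ne_zero.mp (mem_Ico.mp hk).1) (mem_Ico.mp hk).2
  simp only [hcos, hexp, show Icc 1 (N - 1) = Ico 1 N from rfl]
  rw [sum_congr rfl fun k hk => eigenvalue_summand_eq (pow_ne_zero k (hζ.ne_zero hN0)) (hz1 k hk)]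
  simp only [sum_add_distrib, sum_sub_distrib, ← sum_div, ← mul_sum]
  have hN1 : ¬N ∣ 1 := Nat.not_dvd_of_pos_of_lt one_pos (by omega)
  have hN3 : ¬N ∣ 3 := Nat.not_dvd_of_pos_of_lt three_pos (by omega)
  have hsum_pow : ∑ k ∈ Ico 1 N, ζ ^ k = -1 := by
    simpa using hζ.sum_Ico_pow_pow_eq_neg_one hN0 hN1
  have hsum_inv : ∑ k ∈ Ico 1 N, (ζ ^ k)⁻¹ = -1 := by
    simpa using hζ.inv.sum_Ico_pow_pow_eq_neg_one hN0 hN1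
  have hsum_inv_cube : ∑ k ∈ Ico 1 N, (ζ ^ k)⁻¹ ^ 3 = -1 := by
    simpa using hζ.inv.sum_Ico_pow_pow_eq_neg_one hN0 hN3
  rw [hsum_pow, hsum_inv, hsum_inv_cube, hζ.two_mul_sum_Ico_one_div_one_sub_pow,
    Nat.cast_sub (by omega)]
  ring
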